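/- A subset B of [m+r] with |B| = r is a basis of the lattice path matroid M[P,Q] if and only if the lattice path P(B) associated with B stays in the region bounded by P and Q (never goes below P nor above Q). -/

import Mathlib

open Matroid

/-- Steps: `true` is a North step, `false` is an East step. -/
def nCount (w : List Bool) : ℕ := w.count true

def eCount (w : List Bool) : ℕ := w.count false

/-- `P` and `Q` are lattice paths from `(0,0)` to `(m,r)` with `P` never above `Q`. -/
structure IsLatticePair (P Q : List Bool) (m r : ℕ) : Prop where
  lenP : P.length = m + r
  lenQ : Q.length = m + r
  northP : nCount P = r
  northQ : nCount Q = r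
  notAbove : ∀ i, nCount (P.take i) ≤ nCount (Q.take i)

/-- The (1-indexed) positions of the North steps of a path. -/
def northPositions (w : List Bool) : List ℕ :=
  ((List.range w.length).filter (fun j => w.getD j false)).map (· + 1)

/-- `X` is a partial transversal of the intervals `N_i = [l_i, u_i]`, `i < r`, where
`u_i` (resp. `l_i`) is the position of the `i`-th North step of `P` (resp. `Q`). -/
def IsPartialTransversal (P Q : List Bool) (r : ℕ) (X : Set ℕ) : Prop :=
  ∃ f : ℕ → ℕ, Set.InjOn f X ∧ ∀ x ∈ X, f x < r ∧
    (northPositions Q).getD (f x) 0 ≤ x ∧ x ≤ (northPositions P).getD (f x) 0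

/-- `M` is the lattice path matroid `M[P,Q]`: the transversal matroid on `[m+r]`
whose independent sets are the partial transversals of the intervals `N_i`. -/
def IsLPM (M : Matroid ℕ) (P Q : List Bool) (m r : ℕ) : Prop :=
  IsLatticePair P Q m r ∧ M.E = Set.Icc 1 (m + r) ∧
    ∀ X : Set ℕ, M.Indep X ↔ X ⊆ M.E ∧ IsPartialTransversal P Q r X

/-- `[P,Q]` has a `k × k` square at `i`: the length-`i` prefix of `P` has exactly `k`
more East steps than that of `Q`, and the prefix of `Q` has `k` more North steps. -/
def HasSquareAt (P Q : List Bool) (k i : ℕ) : Prop :=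
  eCount (P.take i) = eCount (Q.take i) + k ∧ nCount (Q.take i) = nCount (P.take i) + k

/-- The square-width of a presentation: the largest `k` such that it has a `k × k` square. -/
noncomputable def squareWidth (P Q : List Bool) : ℕ :=
  sSup {k | ∃ i, HasSquareAt P Q k i}

/-- `N` is a minor of `M`: obtained by contracting a set `C` and deleting a set `D`. -/
def IsMinorOf {α : Type*} (N M : Matroid α) : Prop :=
  ∃ C D : Set α, C ⊆ M.E ∧ D ⊆ M.E ∧ Disjoint C D ∧
    N = ((M✶ ↾ (M.E \ C))✶) ↾ ((M.E \ C) \ D)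

/-- An isomorphism between matroids: a bijection of ground sets preserving independence. -/
def MatroidIso {α β : Type*} (M : Matroid α) (N : Matroid β) : Prop :=
  ∃ f : α → β, Set.BijOn f M.E N.E ∧ ∀ X ⊆ M.E, (M.Indep X ↔ N.Indep (f '' X))

/-- `N` is isomorphic to a minor of `M`. -/
def IsIsoMinorOf {α β : Type*} (N : Matroid α) (M : Matroid β) : Prop :=
  ∃ N' : Matroid β, IsMinorOf N' M ∧ MatroidIso N' N

/-- `M` is (isomorphic to) the uniform matroid `U_{r,n}`. -/
def IsUniform {α : Type*} (M : Matroid α) (r n : ℕ) : Prop :=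
  M.E.encard = (n : ℕ∞) ∧ ∀ X ⊆ M.E, (M.Indep X ↔ X.encard ≤ (r : ℕ∞))

/-- The rank (in `ℕ∞`) of a set in a matroid. -/
noncomputable def eRk {α : Type*} (M : Matroid α) (A : Set α) : ℕ∞ :=
  ⨆ I : {I : Set α // M.Indep I ∧ I ⊆ A}, (I : Set α).encard

/-- Binary trees, used to model the cubic trees of branch decompositions. -/
inductive BTree (α : Type*) where
  | leaf : α → BTree α
  | node : BTree α → BTree α → BTree α

def BTree.leafList {α : Type*} : BTree α → List α
  | .leaf a => [a]
  | .node l r => l.leafList ++ r.leafList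

def BTree.subtrees {α : Type*} : BTree α → List (BTree α)
  | .leaf a => [.leaf a]
  | .node l r => .node l r :: (l.subtrees ++ r.subtrees)

/-- The connectivity value `λ(A) = r(A) + r(E \ A) − r(E) + 1`. -/
noncomputable def lamVal {α : Type*} (M : Matroid α) (A : Set α) : ℕ∞ :=
  _root_.eRk M A + _root_.eRk M (M.E \ A) - _root_.eRk M M.E + 1

/-- A branch decomposition of `M`: a (cubic) tree whose leaves are bijectively
labelled by the elements of `M`. -/
def IsBranchDecomp {α : Type*} (M : Matroid α) (t : BTree α) : Prop :=
  t.leafList.Nodup ∧ {x | x ∈ t.leafList} = M.E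

/-- The width of a branch decomposition: the maximum of `λ` over the edges
(equivalently, over the leaf sets of the subtrees). -/
noncomputable def decompWidth {α : Type*} (M : Matroid α) (t : BTree α) : ℕ∞ :=
  (t.subtrees.map (fun s => lamVal M {x | x ∈ s.leafList})).foldr max 0

/-- The branch-width of a matroid. -/
noncomputable def branchWidth {α : Type*} (M : Matroid α) : ℕ∞ :=
  sInf {w | ∃ t : BTree α, IsBranchDecomp M t ∧ decompWidth M t = w}

/-- The lattice path `P(X)` associated to a subset `X` of `[len]`. -/
noncomputable def pathWord (X : Set ℕ) (len : ℕ) : List Bool :=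
  (List.range len).map (fun j => @decide ((j + 1) ∈ X) (Classical.propDecidable _))

def glue (PB QB PT QT : List Bool) (k : ℕ) : List Bool × List Bool :=
  (PB.take (PB.length - k) ++ PT.drop k, QB.take (QB.length - k) ++ QT.drop k)

/-!
Let `b₀ < ⋯ < b_{r-1}` be the elements of `B`, i.e. the positions of the North steps of `P(B)`.
A path has at least `i + 1` North steps among its first `j` steps iff its `i`-th North step is at
a position `≤ j`, so `P(B)` stays between `P` and `Q` iff `l_i ≤ b_i ≤ u_i` for every `i`.
This says that `b_i ↦ N_i` is a matching, and conversely, since both ends of the intervals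
`N_i` increase with `i`, a pigeonhole argument shows that any matching of `B` forces `b_i ∈ N_i`.
Finally, a partial transversal of `r` intervals has at most `r` elements, so the `r`-element
independent set `B` is a basis.
-/

theorem northPositions_cons (a : Bool) (w : List Bool) :
    northPositions (a :: w) = (if a then [1] else []) ++ (northPositions w).map (· + 1) := by
  unfold northPositions
  rw [List.length_cons, List.range_succ_eq_map, List.filter_cons, List.filter_map]
  cases a <;> simp [Function.comp_def, List.map_map]

theorem mem_northPositions {w : List Bool} {x : ℕ} :
    x ∈ northPositions w ↔ 1 ≤ x ∧ x ≤ w.length ∧ w.getD (x - 1) false = true := by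
  simp only [northPositions, List.mem_map, List.mem_filter, List.mem_range]
  constructor
  · rintro ⟨y, ⟨hy, hwy⟩, rfl⟩
    exact ⟨by omega, by omega, by simpa using hwy⟩
  · rintro ⟨h1, h2, h3⟩
    exact ⟨x - 1, ⟨by omega, by simpa using h3⟩, by omega⟩

theorem northPositions_pairwise_lt (w : List Bool) : (northPositions w).Pairwise (· < ·) := by
  induction w with
  | nil => simp [northPositions]
  | cons a w ih =>
    have hsucc : ((northPositions w).map (· + 1)).Pairwise (· < ·) :=
      ih.map _ fun _ _ h => Nat.succ_lt_succ h
    cases a with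
    | false => simpa [northPositions_cons] using hsucc
    | true =>
      simp only [northPositions_cons, if_true, List.singleton_append, List.pairwise_cons]
      refine ⟨?_, hsucc⟩
      simp only [List.mem_map]
      rintro _ ⟨x, hx, rfl⟩
      have := (mem_northPositions.mp hx).1
      omega

theorem length_northPositions (w : List Bool) : (northPositions w).length = nCount w := by
  induction w with
  | nil => simp [northPositions, nCount]
  | cons a w ih => cases a <;> simp_all [northPositions_cons, nCount]

theorem List.getD_map_add_one {L : List ℕ} {i : ℕ} (hi : i < L.length) :
    (L.map (· + 1)).getD i 0 = L.getD i 0 + 1 := by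
  rw [List.getD_eq_getElem _ _ (by simpa using hi), List.getD_eq_getElem _ _ hi, List.getElem_map]

theorem getD_northPositions_le_iff {w : List Bool} {i : ℕ} (hi : i < nCount w) (j : ℕ) :
    (northPositions w).getD i 0 ≤ j ↔ i + 1 ≤ nCount (w.take j) := by
  induction w generalizing i j with
  | nil => simp [nCount] at hi
  | cons a w ih =>
    cases j with
    | zero =>
      have hlen : i < (northPositions (a :: w)).length := by rwa [length_northPositions]
      have hmem := List.getElem_mem hlen
      rw [← List.getD_eq_getElem _ 0] at hmem
      have hpos := (mem_northPositions.mp hmem).1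
      simp only [List.take_zero, nCount, List.count_nil]
      omega
    | succ k =>
      cases a with
      | false =>
        have hi' : i < nCount w := by simpa [nCount] using hi
        rw [northPositions_cons, if_neg Bool.false_ne_true, List.nil_append,
          List.getD_map_add_one (by rwa [length_northPositions]), List.take_succ_cons,
          Nat.add_le_add_iff_right, ih hi' k]
        simp [nCount]
      | true =>
        cases i with
        | zero => simp [northPositions_cons, nCount]
        | succ i =>
          have hi' : i < nCount w := by simpa [nCount] using hi
          rw [northPositions_cons, if_pos rfl, List.singleton_append, List.getD_cons_succ,
            List.getD_map_add_one (by rwa [length_northPositions]), List.take_succ_cons,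
            Nat.add_le_add_iff_right, ih hi' k]
          simp [nCount]

theorem strictMonoOn_getD_northPositions (w : List Bool) :
    StrictMonoOn (fun i => (northPositions w).getD i 0) (Set.Iio (nCount w)) := by
  intro i hi j hj hij
  rw [Set.mem_Iio, ← length_northPositions] at hi hj
  simp only [List.getD_eq_getElem _ _ hi, List.getD_eq_getElem _ _ hj]
  exact List.pairwise_iff_getElem.mp (northPositions_pairwise_lt w) i j hi hj hij

theorem nCount_take_le (w : List Bool) (j : ℕ) : nCount (w.take j) ≤ nCount w :=
  (List.take_sublist j w).count_le true

theorem forall_nCount_take_le_iff {w₁ w₂ : List Bool} {r : ℕ} (h₁ : nCount w₁ = r)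
    (h₂ : nCount w₂ = r) :
    (∀ j, nCount (w₁.take j) ≤ nCount (w₂.take j)) ↔
      ∀ i < r, (northPositions w₂).getD i 0 ≤ (northPositions w₁).getD i 0 := by
  constructor
  · intro h i hi
    rw [getD_northPositions_le_iff (h₂ ▸ hi)]
    exact ((getD_northPositions_le_iff (h₁ ▸ hi) _).mp le_rfl).trans (h _)
  · intro h j
    obtain hk | hk := Nat.eq_zero_or_pos (nCount (w₁.take j))
    · omega
    · have hi : nCount (w₁.take j) - 1 < r := by have := nCount_take_le w₁ j; omega
      have hle := (getD_northPositions_le_iff (h₁ ▸ hi) j).mpr (by omega)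
      have := (getD_northPositions_le_iff (h₂ ▸ hi) j).mp ((h _ hi).trans hle)
      omega

theorem length_pathWord (X : Set ℕ) (n : ℕ) : (pathWord X n).length = n := by
  simp [pathWord]

theorem mem_northPositions_pathWord {B : Set ℕ} {n x : ℕ} (hB : B ⊆ Set.Icc 1 n) :
    x ∈ northPositions (pathWord B n) ↔ x ∈ B := by
  rw [mem_northPositions, length_pathWord]
  constructor
  · rintro ⟨h1, h2, hx⟩
    rw [pathWord, List.getD_eq_getElem _ _ (by simp; omega)] at hx
    simpa [Nat.sub_add_cancel h1] using hx
  · intro hx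
    obtain ⟨h1, h2⟩ := hB hx
    refine ⟨h1, h2, ?_⟩
    rw [pathWord, List.getD_eq_getElem _ _ (by simp; omega)]
    simpa [Nat.sub_add_cancel h1] using hx

theorem nCount_pathWord {B : Set ℕ} {n r : ℕ} (hB : B ⊆ Set.Icc 1 n)
    (hcard : B.encard = r) : nCount (pathWord B n) = r := by
  have hset : B = ↑(northPositions (pathWord B n)).toFinset := by
    ext x
    simp [mem_northPositions_pathWord hB]
  rw [hset, Set.encard_coe_eq_coe_finsetCard,
    List.toFinset_card_of_nodup (northPositions_pairwise_lt _).nodup, length_northPositions]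
    at hcard
  exact_mod_cast hcard

theorem image_getD_northPositions_pathWord {B : Set ℕ} {n : ℕ} (hB : B ⊆ Set.Icc 1 n) :
    (fun i => (northPositions (pathWord B n)).getD i 0) '' Set.Iio (nCount (pathWord B n)) =
      B := by
  ext x
  rw [← mem_northPositions_pathWord hB, List.mem_iff_getElem, ← length_northPositions]
  constructor
  · rintro ⟨i, hi, rfl⟩
    exact ⟨i, hi, (List.getD_eq_getElem _ _ hi).symm⟩
  · rintro ⟨i, hi, rfl⟩
    exact ⟨i, hi, List.getD_eq_getElem _ _ hi⟩

theorem Set.InjOn.exists_le_and_le_apply {g : ℕ → ℕ} {i : ℕ}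
    (hg : Set.InjOn g (Set.Iic i)) : ∃ j ≤ i, i ≤ g j := by
  by_contra! h
  obtain ⟨j, hj, k, hk, hne, hjk⟩ :=
    Finset.exists_ne_map_eq_of_card_lt_of_maps_to (s := Finset.Iic i) (t := Finset.Iio i)
      (by simp) (f := g) fun j hj => by simpa using h j (by simpa using hj)
  exact hne (hg (by simpa using hj) (by simpa using hk) hjk)

theorem Set.InjOn.exists_mem_Ico_apply_le {g : ℕ → ℕ} {i r : ℕ}
    (hg : Set.InjOn g (Set.Ico i r)) (hgr : Set.MapsTo g (Set.Ico i r) (Set.Iio r)) (hi : i < r) :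
    ∃ j ∈ Set.Ico i r, g j ≤ i := by
  by_contra! h
  obtain ⟨j, hj, k, hk, hne, hjk⟩ :=
    Finset.exists_ne_map_eq_of_card_lt_of_maps_to (s := Finset.Ico i r)
      (t := Finset.Ico (i + 1) r) (by simp; omega) (f := g) fun j hj => by
        have hj : j ∈ Set.Ico i r := by simpa using hj
        simpa using ⟨h j hj, hgr hj⟩
  exact hne (hg (by simpa using hj) (by simpa using hk) hjk)

theorem exists_injOn_mem_Icc_iff {l u b : ℕ → ℕ} {r : ℕ} (hl : MonotoneOn l (Set.Iio r))
    (hu : MonotoneOn u (Set.Iio r)) (hb : StrictMonoOn b (Set.Iio r)) :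
    (∃ f : ℕ → ℕ, Set.InjOn f (b '' Set.Iio r) ∧
        ∀ x ∈ b '' Set.Iio r, f x < r ∧ l (f x) ≤ x ∧ x ≤ u (f x)) ↔
      ∀ i < r, l i ≤ b i ∧ b i ≤ u i := by
  constructor
  · -- By pigeonhole, `f` sends some `b j` with `j ≤ i` to an interval of index `≥ i`,
    -- and some `b j` with `j ≥ i` to one of index `≤ i`; monotonicity does the rest.
    rintro ⟨f, hf, hfb⟩ i hi
    have hg : Set.InjOn (f ∘ b) (Set.Iio r) := hf.comp hb.injOn (Set.mapsTo_image b _)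
    have hgb : ∀ j < r, f (b j) < r ∧ l (f (b j)) ≤ b j ∧ b j ≤ u (f (b j)) :=
      fun j hj => hfb _ (Set.mem_image_of_mem b hj)
    constructor
    · have hIic : Set.Iic i ⊆ Set.Iio r := fun j hj => lt_of_le_of_lt hj hi
      obtain ⟨j, hji, hij⟩ := (hg.mono hIic).exists_le_and_le_apply
      have hj : j < r := hIic hji
      calc l i ≤ l (f (b j)) := hl hi (hgb j hj).1 hij
        _ ≤ b j := (hgb j hj).2.1
        _ ≤ b i := hb.monotoneOn hj hi hji
    · obtain ⟨j, ⟨hij, hjr⟩, hji⟩ :=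
        (hg.mono Set.Ico_subset_Iio_self).exists_mem_Ico_apply_le (fun j hj => (hgb j hj.2).1) hi
      calc b i ≤ b j := hb.monotoneOn hi hjr hij
        _ ≤ u (f (b j)) := (hgb j hjr).2.2
        _ ≤ u i := hu (hgb j hjr).1 hi hji
  · intro h
    refine ⟨Function.invFunOn b (Set.Iio r), Function.invFunOn_injOn_image b _, ?_⟩
    rintro _ ⟨i, hi, rfl⟩
    rw [hb.injOn.leftInvOn_invFunOn hi]
    exact ⟨hi, h i hi⟩

theorem isPartialTransversal_pathWord_iff {P Q : List Bool} {B : Set ℕ} {n r : ℕ}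
    (hB : B ⊆ Set.Icc 1 n) (hBr : nCount (pathWord B n) = r) (hP : nCount P = r)
    (hQ : nCount Q = r) :
    IsPartialTransversal P Q r B ↔
      ∀ i < r, (northPositions Q).getD i 0 ≤ (northPositions (pathWord B n)).getD i 0 ∧
        (northPositions (pathWord B n)).getD i 0 ≤ (northPositions P).getD i 0 := by
  conv_lhs => rw [← image_getD_northPositions_pathWord hB, hBr]
  exact exists_injOn_mem_Icc_iff (hQ ▸ strictMonoOn_getD_northPositions Q).monotoneOn
    (hP ▸ strictMonoOn_getD_northPositions P).monotoneOn
    (hBr ▸ strictMonoOn_getD_northPositions _)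

theorem IsPartialTransversal.encard_le {P Q : List Bool} {r : ℕ} {X : Set ℕ}
    (h : IsPartialTransversal P Q r X) : X.encard ≤ r := by
  obtain ⟨f, hf, hfX⟩ := h
  calc X.encard = (f '' X).encard := hf.encard_image.symm
    _ ≤ (Set.Iio r).encard :=
      Set.encard_le_encard (Set.image_subset_iff.mpr fun x hx => (hfX x hx).1)
    _ = r := by simp [Set.encard_eq_coe_toFinset_card]

theorem Matroid.isBase_iff_indep_of_encard_eq {α : Type*} {M : Matroid α} {B : Set α} {r : ℕ}
    (hr : ∀ I, M.Indep I → I.encard ≤ r) (hB : B.encard = r) : M.IsBase B ↔ M.Indep B := by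
  refine ⟨Matroid.IsBase.indep, fun hBi => hBi.isBase_of_maximal fun J hJ hBJ => ?_⟩
  exact (Set.finite_of_encard_eq_coe hB).eq_of_subset_of_encard_le hBJ (hB ▸ hr J hJ)

/-- A subset `B` of `[m+r]` with `|B| = r` is a basis of the lattice path matroid
`M[P,Q]` if and only if the associated lattice path `P(B)` stays in the region
bounded by `P` and `Q` (never below `P` nor above `Q`). -/
theorem stmt_19 (P Q : List Bool) (m r : ℕ) (M : Matroid ℕ)
    (hM : IsLPM M P Q m r) (B : Set ℕ) (hBE : B ⊆ Set.Icc 1 (m + r))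
    (hcard : B.encard = (r : ℕ∞)) :
    M.IsBase B ↔ ∀ j, nCount (P.take j) ≤ nCount ((pathWord B (m + r)).take j) ∧
      nCount ((pathWord B (m + r)).take j) ≤ nCount (Q.take j) := by
  obtain ⟨hPQ, hE, hindep⟩ := hM
  have hBr := nCount_pathWord hBE hcard
  rw [Matroid.isBase_iff_indep_of_encard_eq (fun I hI => ((hindep I).mp hI).2.encard_le) hcard,
    hindep, hE, and_iff_right hBE,
    isPartialTransversal_pathWord_iff hBE hBr hPQ.northP hPQ.northQ, forall_and,
    forall_nCount_take_le_iff hPQ.northP hBr, forall_nCount_take_le_iff hBr hPQ.northQ, and_comm]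
  simp only [← imp_and, ← forall_and]
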